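/- Let α ∈ [1, 3/2], δ ∈ (0, 1], ε > 0, and let P ≥ 1 be a real number such that A₁ := P^{(α−1)/2} and A₂ := P^{α−1} are positive integers. Set Q_max = P^{(α/3−ε)/2}. For (h₁₁, h₁₂, h₂₁, h₂₂) ∈ (1,2]⁴ put ḡ₀ = h₁₁h₂₂, ḡ₁ = h₁₂h₁₁, ḡ₂ = h₁₂h₂₁, and define d̄_min(ḡ₀, ḡ₁, ḡ₂) as the minimum of |ḡ₀(q₀ − q₀') + A₁·ḡ₁·(q₁ − q₁') + A₂·ḡ₂·(q₂ − q₂')| over all integer tuples with q₀, q₂, q₀', q₂' ∈ ℤ ∩ [−Q_max, Q_max], q₁, q₁' ∈ ℤ ∩ [−2Q_max, 2Q_max], and (q₀, q₁, q₂) ≠ (q₀', q₁', q₂'). Then there exists a measurable set H̄₀ ⊆ (1,2]⁴ whose four-dimensional Lebesgue measure is at most 258048·δ·P^{−ε/2}, such that for every (h₁₁, h₁₂, h₂₁, h₂₂) ∈ (1,2]⁴ \ H̄₀ one has d̄_min(ḡ₀, ḡ₁, ḡ₂) ≥ δ·P^{−(2−4α/3)/2}. -/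

import Mathlib

open MeasureTheory Real
open scoped ENNReal

lemma oneD {A B d κ : ℝ} (hκ : 0 < κ) (hA : κ ≤ |A|) :
    volume {x : ℝ | |A * x + B| < d} ≤ ENNReal.ofReal (2 * d / κ) := by
  have hA0 : A ≠ 0 := by
    intro h; rw [h, abs_zero] at hA; linarith
  rcases le_or_gt d 0 with hd | hd
  · have : {x : ℝ | |A * x + B| < d} = ∅ := by
      ext x; simp only [Set.mem_setOf_eq, Set.mem_empty_iff_false, iff_false, not_lt]
      exact le_trans hd (abs_nonneg _)
    rw [this]; simp
  rcases lt_or_gt_of_ne hA0 with hneg | hpos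
  · have hset : {x : ℝ | |A * x + B| < d} = Set.Ioo ((d - B)/A) ((-d - B)/A) := by
      ext x
      simp only [Set.mem_setOf_eq, Set.mem_Ioo, abs_lt]
      constructor
      · rintro ⟨h1, h2⟩
        constructor
        · rw [div_lt_iff_of_neg hneg]; linarith
        · rw [lt_div_iff_of_neg hneg]; linarith
      · rintro ⟨h1, h2⟩
        rw [div_lt_iff_of_neg hneg] at h1
        rw [lt_div_iff_of_neg hneg] at h2
        constructor <;> linarith
    rw [hset, Real.volume_Ioo]
    apply ENNReal.ofReal_le_ofReal
    have habs : |A| = -A := abs_of_neg hneg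
    have h2 : (-d - B)/A - (d - B)/A = 2 * d / (-A) := by
      rw [div_sub_div_same]
      have h3 : -d - B - (d - B) = -(2 * d) := by ring
      rw [h3, neg_div, ← div_neg]
    rw [h2]
    apply div_le_div_of_nonneg_left (by linarith) hκ (by rw [habs] at hA; exact hA)
  · have hset : {x : ℝ | |A * x + B| < d} = Set.Ioo ((-d - B)/A) ((d - B)/A) := by
      ext x
      simp only [Set.mem_setOf_eq, Set.mem_Ioo, abs_lt]
      constructor
      · rintro ⟨h1, h2⟩
        constructor
        · rw [div_lt_iff₀ hpos]; linarith
        · rw [lt_div_iff₀ hpos]; linarith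
      · rintro ⟨h1, h2⟩
        rw [div_lt_iff₀ hpos] at h1
        rw [lt_div_iff₀ hpos] at h2
        constructor <;> linarith
    rw [hset, Real.volume_Ioo]
    apply ENNReal.ofReal_le_ofReal
    have h2 : (d - B)/A - (-d - B)/A = 2 * d / A := by
      field_simp; ring
    rw [h2]
    apply div_le_div_of_nonneg_left (by linarith) hκ (by rw [abs_of_pos hpos] at hA; exact hA)

lemma slice_left {α β : Type*} [MeasurableSpace α] [MeasurableSpace β]
    (μ : Measure α) (ν : Measure β) [SFinite ν]
    {S : Set (α × β)} (hS : MeasurableSet S) {U : Set α} (hU : MeasurableSet U)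
    (hsub : ∀ p ∈ S, p.1 ∈ U) (C : ℝ≥0∞)
    (hC : ∀ x ∈ U, ν (Prod.mk x ⁻¹' S) ≤ C) :
    μ.prod ν S ≤ μ U * C := by
  rw [Measure.prod_apply hS]
  calc ∫⁻ x, ν (Prod.mk x ⁻¹' S) ∂μ
      ≤ ∫⁻ x, U.indicator (fun _ => C) x ∂μ := by
        refine lintegral_mono fun x => ?_
        by_cases hx : x ∈ U
        · simpa [Set.indicator_of_mem hx] using hC x hx
        · have he : Prod.mk x ⁻¹' S = ∅ := by
            ext y
            simp only [Set.mem_preimage, Set.mem_empty_iff_false, iff_false]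
            exact fun hy => hx (hsub _ hy)
          simp [Set.indicator_of_notMem hx, he]
    _ = μ U * C := by rw [lintegral_indicator_const hU]; ring

lemma slice_right {α β : Type*} [MeasurableSpace α] [MeasurableSpace β]
    (μ : Measure α) (ν : Measure β) [SFinite μ] [SFinite ν]
    {S : Set (α × β)} (hS : MeasurableSet S) {V : Set β} (hV : MeasurableSet V)
    (hsub : ∀ p ∈ S, p.2 ∈ V) (C : ℝ≥0∞)
    (hC : ∀ y ∈ V, μ ((fun x => (x, y)) ⁻¹' S) ≤ C) :
    μ.prod ν S ≤ C * ν V := by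
  rw [Measure.prod_apply_symm hS]
  calc ∫⁻ y, μ ((fun x => (x, y)) ⁻¹' S) ∂ν
      ≤ ∫⁻ y, V.indicator (fun _ => C) y ∂ν := by
        refine lintegral_mono fun y => ?_
        by_cases hy : y ∈ V
        · simpa [Set.indicator_of_mem hy] using hC y hy
        · have he : (fun x => (x, y)) ⁻¹' S = ∅ := by
            ext x
            simp only [Set.mem_preimage, Set.mem_empty_iff_false, iff_false]
            exact fun hx => hy (hsub _ hx)
          simp [Set.indicator_of_notMem hy, he]
    _ = C * ν V := by rw [lintegral_indicator_const hV]

lemma sum_bound {γ : Type*} (s t : Finset γ) (f : γ → ℝ≥0∞) (P : γ → Prop)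
    [DecidablePred P] (C : ℝ≥0∞)
    (h1 : ∀ x ∈ s, ¬ P x → f x = 0) (h2 : ∀ x ∈ s, P x → f x ≤ C)
    (h3 : ∀ x ∈ s, P x → x ∈ t) :
    ∑ x ∈ s, f x ≤ (t.card : ℝ≥0∞) * C := by
  calc ∑ x ∈ s, f x ≤ ∑ x ∈ s, (if P x then C else 0) := by
        refine Finset.sum_le_sum fun x hx => ?_
        by_cases h : P x
        · simpa [h] using h2 x hx h
        · simp [h, h1 x hx h]
    _ = ∑ _x ∈ s.filter P, C := (Finset.sum_filter _ _).symm
    _ = ((s.filter P).card : ℝ≥0∞) * C := by rw [Finset.sum_const, nsmul_eq_mul]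
    _ ≤ (t.card : ℝ≥0∞) * C := by
        apply mul_le_mul_left
        apply Nat.cast_le.mpr
        apply Finset.card_le_card
        intro x hx
        rcases Finset.mem_filter.mp hx with ⟨hxs, hxP⟩
        exact h3 x hxs hxP

lemma card_Icc_le {m : ℤ} {r : ℝ} (hm : 0 ≤ m) (h : (m : ℝ) ≤ r) :
    (((Finset.Icc (-m) m).card : ℕ) : ℝ≥0∞) ≤ ENNReal.ofReal (2 * r + 1) := by
  have hc : (((Finset.Icc (-m) m).card : ℕ) : ℝ) = 2 * (m : ℝ) + 1 := by
    rw [Int.card_Icc]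
    have h2 : m + 1 - (-m) = 2 * m + 1 := by ring
    rw [h2]
    have h4 : ((2 * m + 1).toNat : ℤ) = 2 * m + 1 := Int.toNat_of_nonneg (by linarith)
    have h5 : (((2 * m + 1).toNat : ℕ) : ℝ) = ((2 * m + 1 : ℤ) : ℝ) := by exact_mod_cast h4
    rw [h5]; push_cast; ring
  rw [← ENNReal.ofReal_natCast]
  apply ENNReal.ofReal_le_ofReal
  rw [hc]; linarith


/-- The hypercube `(1,2]⁴ ⊆ ℝ⁴`. -/
def channelCube : Set (ℝ × ℝ × ℝ × ℝ) :=
  (Set.Ioc 1 2) ×ˢ (Set.Ioc 1 2) ×ˢ (Set.Ioc 1 2) ×ˢ (Set.Ioc 1 2)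

noncomputable def Ff (A₁ A₂ : ℝ) (t : ℤ × ℤ × ℤ) (p : ℝ × ℝ × ℝ × ℝ) : ℝ :=
  p.1 * p.2.2.2 * (t.1 : ℝ) + A₁ * (p.2.1 * p.1) * (t.2.1 : ℝ) + A₂ * (p.2.1 * p.2.2.1) * (t.2.2 : ℝ)

def Bad (A₁ A₂ d : ℝ) (t : ℤ × ℤ × ℤ) : Set (ℝ × ℝ × ℝ × ℝ) :=
  channelCube ∩ {p | |Ff A₁ A₂ t p| < d}

lemma mem_cube {p : ℝ × ℝ × ℝ × ℝ} (h : p ∈ channelCube) :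
    (1 < p.1 ∧ p.1 ≤ 2) ∧ (1 < p.2.1 ∧ p.2.1 ≤ 2) ∧ (1 < p.2.2.1 ∧ p.2.2.1 ≤ 2) ∧
      (1 < p.2.2.2 ∧ p.2.2.2 ≤ 2) := by
  simpa [channelCube, Set.mem_prod, Set.mem_Ioc] using h

lemma measurable_cube : MeasurableSet channelCube :=
  measurableSet_Ioc.prod (measurableSet_Ioc.prod (measurableSet_Ioc.prod measurableSet_Ioc))

lemma continuous_Ff (A₁ A₂ : ℝ) (t : ℤ × ℤ × ℤ) : Continuous (Ff A₁ A₂ t) := by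
  unfold Ff; fun_prop

lemma measurable_Bad (A₁ A₂ d : ℝ) (t : ℤ × ℤ × ℤ) : MeasurableSet (Bad A₁ A₂ d t) :=
  measurable_cube.inter
    ((isOpen_lt (continuous_abs.comp (continuous_Ff A₁ A₂ t)) continuous_const).measurableSet)

lemma Bad_subset (A₁ A₂ d : ℝ) (t : ℤ × ℤ × ℤ) : Bad A₁ A₂ d t ⊆ channelCube :=
  Set.inter_subset_left

lemma term_bounds {x w r : ℝ} (hx1 : 1 < x) (hx2 : x ≤ 2) (hw1 : 1 < w) (hw2 : w ≤ 2) :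
    |r| ≤ |x * w * r| ∧ |x * w * r| ≤ 4 * |r| := by
  have h1 : |x * w * r| = x * w * |r| := by
    rw [abs_mul, abs_mul, abs_of_pos (by linarith : (0:ℝ) < x), abs_of_pos (by linarith : (0:ℝ) < w)]
  constructor <;> rw [h1]
  · nlinarith [mul_nonneg (by nlinarith : (0:ℝ) ≤ x * w - 1) (abs_nonneg r)]
  · nlinarith [mul_nonneg (by nlinarith : (0:ℝ) ≤ 4 - x * w) (abs_nonneg r)]

lemma term_bounds' {A y x r : ℝ} (hA : 0 ≤ A) (hy1 : 1 < y) (hy2 : y ≤ 2) (hx1 : 1 < x)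
    (hx2 : x ≤ 2) :
    A * |r| ≤ |A * (y * x) * r| ∧ |A * (y * x) * r| ≤ 4 * (A * |r|) := by
  have h1 : |A * (y * x) * r| = A * (y * x) * |r| := by
    rw [abs_mul, abs_mul, abs_of_nonneg hA, abs_of_pos (by nlinarith : (0:ℝ) < y * x)]
  constructor <;> rw [h1]
  · nlinarith [mul_nonneg (mul_nonneg hA (by nlinarith : (0:ℝ) ≤ y * x - 1)) (abs_nonneg r)]
  · nlinarith [mul_nonneg (mul_nonneg hA (by nlinarith : (0:ℝ) ≤ 4 - y * x)) (abs_nonneg r)]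

lemma Bad_empty_a {A₁ A₂ d : ℝ} {a b c : ℤ} (hA1 : 0 ≤ A₁) (hA2 : 0 ≤ A₂)
    (h : d + 4 * (A₁ * |(b:ℝ)|) + 4 * (A₂ * |(c:ℝ)|) ≤ |(a:ℝ)|) :
    Bad A₁ A₂ d (a, b, c) = ∅ := by
  ext p
  simp only [Bad, Set.mem_inter_iff, Set.mem_setOf_eq, Set.mem_empty_iff_false, iff_false, not_and]
  intro hp hF
  obtain ⟨⟨hx1, hx2⟩, ⟨hy1, hy2⟩, ⟨hz1, hz2⟩, ⟨hw1, hw2⟩⟩ := mem_cube hp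
  have hdec : p.1 * p.2.2.2 * (a:ℝ) =
      Ff A₁ A₂ (a, b, c) p + (-(A₁ * (p.2.1 * p.1) * (b:ℝ))) + (-(A₂ * (p.2.1 * p.2.2.1) * (c:ℝ))) := by
    unfold Ff; ring
  have h3 := abs_add_three (Ff A₁ A₂ (a, b, c) p) (-(A₁ * (p.2.1 * p.1) * (b:ℝ)))
      (-(A₂ * (p.2.1 * p.2.2.1) * (c:ℝ)))
  rw [← hdec, abs_neg, abs_neg] at h3
  have hb := (term_bounds' hA1 hy1 hy2 hx1 hx2 (r := (b:ℝ))).2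
  have hc := (term_bounds' hA2 hy1 hy2 hz1 hz2 (r := (c:ℝ))).2
  have ha := (term_bounds hx1 hx2 hw1 hw2 (r := (a:ℝ))).1
  linarith

lemma Bad_empty_b {A₁ A₂ d : ℝ} {a b c : ℤ} (hA1 : 0 ≤ A₁) (hA2 : 0 ≤ A₂)
    (h : d + 4 * |(a:ℝ)| + 4 * (A₂ * |(c:ℝ)|) ≤ A₁ * |(b:ℝ)|) :
    Bad A₁ A₂ d (a, b, c) = ∅ := by
  ext p
  simp only [Bad, Set.mem_inter_iff, Set.mem_setOf_eq, Set.mem_empty_iff_false, iff_false, not_and]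
  intro hp hF
  obtain ⟨⟨hx1, hx2⟩, ⟨hy1, hy2⟩, ⟨hz1, hz2⟩, ⟨hw1, hw2⟩⟩ := mem_cube hp
  have hdec : A₁ * (p.2.1 * p.1) * (b:ℝ) =
      Ff A₁ A₂ (a, b, c) p + (-(p.1 * p.2.2.2 * (a:ℝ))) + (-(A₂ * (p.2.1 * p.2.2.1) * (c:ℝ))) := by
    unfold Ff; ring
  have h3 := abs_add_three (Ff A₁ A₂ (a, b, c) p) (-(p.1 * p.2.2.2 * (a:ℝ)))
      (-(A₂ * (p.2.1 * p.2.2.1) * (c:ℝ)))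
  rw [← hdec, abs_neg, abs_neg] at h3
  have hb := (term_bounds' hA1 hy1 hy2 hx1 hx2 (r := (b:ℝ))).1
  have hc := (term_bounds' hA2 hy1 hy2 hz1 hz2 (r := (c:ℝ))).2
  have ha := (term_bounds hx1 hx2 hw1 hw2 (r := (a:ℝ))).2
  linarith

lemma Bad_empty_c {A₁ A₂ d : ℝ} {a b c : ℤ} (hA1 : 0 ≤ A₁) (hA2 : 0 ≤ A₂)
    (h : d + 4 * |(a:ℝ)| + 4 * (A₁ * |(b:ℝ)|) ≤ A₂ * |(c:ℝ)|) :
    Bad A₁ A₂ d (a, b, c) = ∅ := by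
  ext p
  simp only [Bad, Set.mem_inter_iff, Set.mem_setOf_eq, Set.mem_empty_iff_false, iff_false, not_and]
  intro hp hF
  obtain ⟨⟨hx1, hx2⟩, ⟨hy1, hy2⟩, ⟨hz1, hz2⟩, ⟨hw1, hw2⟩⟩ := mem_cube hp
  have hdec : A₂ * (p.2.1 * p.2.2.1) * (c:ℝ) =
      Ff A₁ A₂ (a, b, c) p + (-(p.1 * p.2.2.2 * (a:ℝ))) + (-(A₁ * (p.2.1 * p.1) * (b:ℝ))) := by
    unfold Ff; ring
  have h3 := abs_add_three (Ff A₁ A₂ (a, b, c) p) (-(p.1 * p.2.2.2 * (a:ℝ)))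
      (-(A₁ * (p.2.1 * p.1) * (b:ℝ)))
  rw [← hdec, abs_neg, abs_neg] at h3
  have hb := (term_bounds' hA1 hy1 hy2 hx1 hx2 (r := (b:ℝ))).2
  have hc := (term_bounds' hA2 hy1 hy2 hz1 hz2 (r := (c:ℝ))).1
  have ha := (term_bounds hx1 hx2 hw1 hw2 (r := (a:ℝ))).2
  linarith

lemma volume_Ioc12 : volume (Set.Ioc (1:ℝ) 2) = 1 := by
  rw [Real.volume_Ioc]; norm_num

lemma abs_int_ge1 {c : ℤ} (hc : c ≠ 0) : (1:ℝ) ≤ |(c:ℝ)| := by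
  have := Int.one_le_abs hc
  exact_mod_cast this

lemma M1 {A₁ A₂ d : ℝ} {a b c : ℤ} (hA2 : 1 ≤ A₂) (hc : c ≠ 0) :
    volume (Bad A₁ A₂ d (a, b, c)) ≤ ENNReal.ofReal (2 * d / (A₂ * |(c:ℝ)|)) := by
  have hc1 : (1:ℝ) ≤ |(c:ℝ)| := abs_int_ge1 hc
  have hκ : 0 < A₂ * |(c:ℝ)| := by nlinarith
  set C := ENNReal.ofReal (2 * d / (A₂ * |(c:ℝ)|)) with hCdef
  have lvl3 : ∀ x ∈ Set.Ioc (1:ℝ) 2, ∀ y ∈ Set.Ioc (1:ℝ) 2,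
      volume (Prod.mk y ⁻¹' (Prod.mk x ⁻¹' Bad A₁ A₂ d (a, b, c))) ≤ C := by
    intro x hx y hy
    have hS₂ : MeasurableSet (Prod.mk y ⁻¹' (Prod.mk x ⁻¹' Bad A₁ A₂ d (a, b, c))) :=
      ((measurable_Bad A₁ A₂ d (a, b, c)).preimage measurable_prodMk_left).preimage
        measurable_prodMk_left
    rw [Measure.volume_eq_prod]
    have key : ∀ w ∈ Set.Ioc (1:ℝ) 2,
        volume ((fun z => (z, w)) ⁻¹' (Prod.mk y ⁻¹' (Prod.mk x ⁻¹' Bad A₁ A₂ d (a, b, c)))) ≤ C := by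
      intro w hw
      have hsub : ((fun z => (z, w)) ⁻¹' (Prod.mk y ⁻¹' (Prod.mk x ⁻¹' Bad A₁ A₂ d (a, b, c)))) ⊆
          {z : ℝ | |(A₂ * y * (c:ℝ)) * z + (x * w * (a:ℝ) + A₁ * (y * x) * (b:ℝ))| < d} := by
        intro z hz
        have hF : |Ff A₁ A₂ (a, b, c) (x, y, z, w)| < d := hz.2
        have heq : Ff A₁ A₂ (a, b, c) (x, y, z, w) =
            (A₂ * y * (c:ℝ)) * z + (x * w * (a:ℝ) + A₁ * (y * x) * (b:ℝ)) := by
          unfold Ff; ring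
        simpa [Set.mem_setOf_eq, ← heq] using hF
      refine le_trans (measure_mono hsub) ?_
      apply oneD hκ
      have habs : |A₂ * y * (c:ℝ)| = A₂ * y * |(c:ℝ)| := by
        rw [abs_mul, abs_mul, abs_of_nonneg (by linarith : (0:ℝ) ≤ A₂),
          abs_of_pos (by linarith [hy.1] : (0:ℝ) < y)]
      rw [habs]
      nlinarith [hy.1, abs_nonneg ((c:ℝ))]
    have hsub2 : ∀ p ∈ (Prod.mk y ⁻¹' (Prod.mk x ⁻¹' Bad A₁ A₂ d (a, b, c))),
        p.2 ∈ Set.Ioc (1:ℝ) 2 := by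
      intro p hp
      exact hp.1.2.2.2
    calc (volume : Measure ℝ).prod volume (Prod.mk y ⁻¹' (Prod.mk x ⁻¹' Bad A₁ A₂ d (a, b, c)))
        ≤ C * volume (Set.Ioc (1:ℝ) 2) :=
          slice_right volume volume hS₂ measurableSet_Ioc hsub2 C key
      _ = C := by rw [volume_Ioc12, mul_one]
  have lvl2 : ∀ x ∈ Set.Ioc (1:ℝ) 2,
      volume (Prod.mk x ⁻¹' Bad A₁ A₂ d (a, b, c)) ≤ C := by
    intro x hx
    have hS₁ : MeasurableSet (Prod.mk x ⁻¹' Bad A₁ A₂ d (a, b, c)) :=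
      (measurable_Bad A₁ A₂ d (a, b, c)).preimage measurable_prodMk_left
    rw [Measure.volume_eq_prod]
    calc (volume : Measure ℝ).prod volume (Prod.mk x ⁻¹' Bad A₁ A₂ d (a, b, c))
        ≤ volume (Set.Ioc (1:ℝ) 2) * C :=
          slice_left volume volume hS₁ measurableSet_Ioc (fun q hq => hq.1.2.1) C (lvl3 x hx)
      _ = C := by rw [volume_Ioc12, one_mul]
  rw [Measure.volume_eq_prod]
  calc (volume : Measure ℝ).prod volume (Bad A₁ A₂ d (a, b, c))
      ≤ volume (Set.Ioc (1:ℝ) 2) * C :=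
        slice_left volume volume (measurable_Bad A₁ A₂ d (a, b, c)) measurableSet_Ioc
          (fun p hp => hp.1.1) C lvl2
    _ = C := by rw [volume_Ioc12, one_mul]

lemma M2 {A₁ A₂ d : ℝ} {a b c : ℤ} {κ : ℝ} (hκ : 0 < κ)
    (hco : ∀ x z : ℝ, x ∈ Set.Ioc (1:ℝ) 2 → z ∈ Set.Ioc (1:ℝ) 2 →
      κ ≤ |A₁ * x * (b:ℝ) + A₂ * z * (c:ℝ)|) :
    volume (Bad A₁ A₂ d (a, b, c)) ≤ ENNReal.ofReal (2 * d / κ) := by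
  set C := ENNReal.ofReal (2 * d / κ) with hCdef
  have hV : volume ((Set.Ioc (1:ℝ) 2) ×ˢ (Set.Ioc (1:ℝ) 2)) = 1 := by
    rw [Measure.volume_eq_prod, Measure.prod_prod, volume_Ioc12, mul_one]
  have lvl2 : ∀ x ∈ Set.Ioc (1:ℝ) 2,
      volume (Prod.mk x ⁻¹' Bad A₁ A₂ d (a, b, c)) ≤ C := by
    intro x hx
    have hS₁ : MeasurableSet (Prod.mk x ⁻¹' Bad A₁ A₂ d (a, b, c)) :=
      (measurable_Bad A₁ A₂ d (a, b, c)).preimage measurable_prodMk_left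
    rw [Measure.volume_eq_prod]
    have key : ∀ v ∈ (Set.Ioc (1:ℝ) 2) ×ˢ (Set.Ioc (1:ℝ) 2),
        volume ((fun y => (y, v)) ⁻¹' (Prod.mk x ⁻¹' Bad A₁ A₂ d (a, b, c))) ≤ C := by
      intro v hv
      have hsub : ((fun y => (y, v)) ⁻¹' (Prod.mk x ⁻¹' Bad A₁ A₂ d (a, b, c))) ⊆
          {y : ℝ | |(A₁ * x * (b:ℝ) + A₂ * v.1 * (c:ℝ)) * y + x * v.2 * (a:ℝ)| < d} := by
        intro y hy
        have hF : |Ff A₁ A₂ (a, b, c) (x, y, v.1, v.2)| < d := by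
          have : (x, y, v.1, v.2) ∈ Bad A₁ A₂ d (a, b, c) := by
            simpa using hy
          exact this.2
        have heq : Ff A₁ A₂ (a, b, c) (x, y, v.1, v.2) =
            (A₁ * x * (b:ℝ) + A₂ * v.1 * (c:ℝ)) * y + x * v.2 * (a:ℝ) := by
          unfold Ff; ring
        simpa [Set.mem_setOf_eq, ← heq] using hF
      refine le_trans (measure_mono hsub) ?_
      exact oneD hκ (hco x v.1 hx hv.1)
    have hsub2 : ∀ p ∈ (Prod.mk x ⁻¹' Bad A₁ A₂ d (a, b, c)),
        p.2 ∈ (Set.Ioc (1:ℝ) 2) ×ˢ (Set.Ioc (1:ℝ) 2) := by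
      intro p hp
      exact ⟨hp.1.2.2.1, hp.1.2.2.2⟩
    calc (volume : Measure ℝ).prod volume (Prod.mk x ⁻¹' Bad A₁ A₂ d (a, b, c))
        ≤ C * volume ((Set.Ioc (1:ℝ) 2) ×ˢ (Set.Ioc (1:ℝ) 2)) :=
          slice_right volume volume hS₁ (measurableSet_Ioc.prod measurableSet_Ioc) hsub2 C key
      _ = C := by rw [hV, mul_one]
  rw [Measure.volume_eq_prod]
  calc (volume : Measure ℝ).prod volume (Bad A₁ A₂ d (a, b, c))
      ≤ volume (Set.Ioc (1:ℝ) 2) * C :=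
        slice_left volume volume (measurable_Bad A₁ A₂ d (a, b, c)) measurableSet_Ioc
          (fun p hp => hp.1.1) C lvl2
    _ = C := by rw [volume_Ioc12, one_mul]

lemma M3 {A₁ A₂ d : ℝ} {a b c : ℤ} (hA1 : 0 ≤ A₁) (hA2 : 1 ≤ A₂) (hd0 : 0 < d) (hd1 : d ≤ 1)
    (ha : a ≠ 0) (hc : c ≠ 0) :
    volume (Bad A₁ A₂ d (a, b, c)) ≤ ENNReal.ofReal (20 * d / (A₂ * |(c:ℝ)|)) := by
  have hc1 : (1:ℝ) ≤ |(c:ℝ)| := abs_int_ge1 hc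
  have ha1 : (1:ℝ) ≤ |(a:ℝ)| := abs_int_ge1 ha
  have hκc : 0 < A₂ * |(c:ℝ)| := by nlinarith
  have hκa : 0 < |(a:ℝ)| := by linarith
  set C := ENNReal.ofReal (2 * (4 * |(a:ℝ)| + d) / (A₂ * |(c:ℝ)|)) *
    ENNReal.ofReal (2 * d / |(a:ℝ)|) with hCdef
  have lvl3 : ∀ x ∈ Set.Ioc (1:ℝ) 2, ∀ y ∈ Set.Ioc (1:ℝ) 2,
      volume (Prod.mk y ⁻¹' (Prod.mk x ⁻¹' Bad A₁ A₂ d (a, b, c))) ≤ C := by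
    intro x hx y hy
    have hS₂ : MeasurableSet (Prod.mk y ⁻¹' (Prod.mk x ⁻¹' Bad A₁ A₂ d (a, b, c))) :=
      ((measurable_Bad A₁ A₂ d (a, b, c)).preimage measurable_prodMk_left).preimage
        measurable_prodMk_left
    rw [Measure.volume_eq_prod]
    set U : Set ℝ := {z : ℝ | z ∈ Set.Ioc (1:ℝ) 2 ∧
      |(A₂ * y * (c:ℝ)) * z + A₁ * (y * x) * (b:ℝ)| < 4 * |(a:ℝ)| + d} with hUdef
    have hU : MeasurableSet U := by
      apply MeasurableSet.inter measurableSet_Ioc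
      have : Continuous fun z : ℝ => |(A₂ * y * (c:ℝ)) * z + A₁ * (y * x) * (b:ℝ)| := by
        fun_prop
      exact (isOpen_lt this continuous_const).measurableSet
    have hUsub : ∀ p ∈ (Prod.mk y ⁻¹' (Prod.mk x ⁻¹' Bad A₁ A₂ d (a, b, c))), p.1 ∈ U := by
      intro p hp
      refine ⟨hp.1.2.2.1, ?_⟩
      have hF : |Ff A₁ A₂ (a, b, c) (x, y, p.1, p.2)| < d := hp.2
      have heq : (A₂ * y * (c:ℝ)) * p.1 + A₁ * (y * x) * (b:ℝ) =
          Ff A₁ A₂ (a, b, c) (x, y, p.1, p.2) - x * p.2 * (a:ℝ) := by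
        unfold Ff; ring
      have htri : |Ff A₁ A₂ (a, b, c) (x, y, p.1, p.2) - x * p.2 * (a:ℝ)| ≤
          |Ff A₁ A₂ (a, b, c) (x, y, p.1, p.2)| + |x * p.2 * (a:ℝ)| := by
        rw [sub_eq_add_neg]
        exact le_trans (abs_add_le _ _) (by rw [abs_neg])
      have hxa : |x * p.2 * (a:ℝ)| ≤ 4 * |(a:ℝ)| :=
        (term_bounds hx.1 hx.2 hp.1.2.2.2.1 hp.1.2.2.2.2).2
      rw [heq]
      linarith
    have hUvol : volume U ≤ ENNReal.ofReal (2 * (4 * |(a:ℝ)| + d) / (A₂ * |(c:ℝ)|)) := by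
      have hsub : U ⊆ {z : ℝ |
          |(A₂ * y * (c:ℝ)) * z + A₁ * (y * x) * (b:ℝ)| < 4 * |(a:ℝ)| + d} := fun z hz => hz.2
      refine le_trans (measure_mono hsub) ?_
      apply oneD hκc
      have habs : |A₂ * y * (c:ℝ)| = A₂ * y * |(c:ℝ)| := by
        rw [abs_mul, abs_mul, abs_of_nonneg (by linarith : (0:ℝ) ≤ A₂),
          abs_of_pos (by linarith [hy.1] : (0:ℝ) < y)]
      rw [habs]
      nlinarith [hy.1, abs_nonneg ((c:ℝ))]
    have key : ∀ z ∈ U,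
        volume (Prod.mk z ⁻¹' (Prod.mk y ⁻¹' (Prod.mk x ⁻¹' Bad A₁ A₂ d (a, b, c)))) ≤
          ENNReal.ofReal (2 * d / |(a:ℝ)|) := by
      intro z hz
      have hsub : (Prod.mk z ⁻¹' (Prod.mk y ⁻¹' (Prod.mk x ⁻¹' Bad A₁ A₂ d (a, b, c)))) ⊆
          {w : ℝ | |(x * (a:ℝ)) * w + (A₁ * (y * x) * (b:ℝ) + A₂ * (y * z) * (c:ℝ))| < d} := by
        intro w hw
        have hF : |Ff A₁ A₂ (a, b, c) (x, y, z, w)| < d := hw.2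
        have heq : Ff A₁ A₂ (a, b, c) (x, y, z, w) =
            (x * (a:ℝ)) * w + (A₁ * (y * x) * (b:ℝ) + A₂ * (y * z) * (c:ℝ)) := by
          unfold Ff; ring
        simpa [Set.mem_setOf_eq, ← heq] using hF
      refine le_trans (measure_mono hsub) ?_
      apply oneD hκa
      rw [abs_mul, abs_of_pos (by linarith [hx.1] : (0:ℝ) < x)]
      nlinarith [hx.1, abs_nonneg ((a:ℝ))]
    calc (volume : Measure ℝ).prod volume (Prod.mk y ⁻¹' (Prod.mk x ⁻¹' Bad A₁ A₂ d (a, b, c)))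
        ≤ volume U * ENNReal.ofReal (2 * d / |(a:ℝ)|) :=
          slice_left volume volume hS₂ hU hUsub _ key
      _ ≤ C := mul_le_mul_left hUvol _
  have lvl2 : ∀ x ∈ Set.Ioc (1:ℝ) 2,
      volume (Prod.mk x ⁻¹' Bad A₁ A₂ d (a, b, c)) ≤ C := by
    intro x hx
    have hS₁ : MeasurableSet (Prod.mk x ⁻¹' Bad A₁ A₂ d (a, b, c)) :=
      (measurable_Bad A₁ A₂ d (a, b, c)).preimage measurable_prodMk_left
    rw [Measure.volume_eq_prod]
    calc (volume : Measure ℝ).prod volume (Prod.mk x ⁻¹' Bad A₁ A₂ d (a, b, c))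
        ≤ volume (Set.Ioc (1:ℝ) 2) * C :=
          slice_left volume volume hS₁ measurableSet_Ioc (fun q hq => hq.1.2.1) C (lvl3 x hx)
      _ = C := by rw [volume_Ioc12, one_mul]
  have hmain : volume (Bad A₁ A₂ d (a, b, c)) ≤ C := by
    rw [Measure.volume_eq_prod]
    calc (volume : Measure ℝ).prod volume (Bad A₁ A₂ d (a, b, c))
        ≤ volume (Set.Ioc (1:ℝ) 2) * C :=
          slice_left volume volume (measurable_Bad A₁ A₂ d (a, b, c)) measurableSet_Ioc
            (fun p hp => hp.1.1) C lvl2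
      _ = C := by rw [volume_Ioc12, one_mul]
  refine le_trans hmain ?_
  rw [hCdef, ← ENNReal.ofReal_mul (by positivity)]
  apply ENNReal.ofReal_le_ofReal
  rw [div_mul_div_comm, div_le_div_iff₀ (by positivity) hκc]
  nlinarith [mul_pos hκc hκa, mul_nonneg (mul_nonneg hd0.le hκc.le) (sub_nonneg.mpr (le_trans hd1 ha1))]

lemma M4 {A₁ A₂ d : ℝ} {a b c : ℤ} (hA1 : 1 ≤ A₁) (hA2 : 1 ≤ A₂) (hd0 : 0 < d)
    (hbc : ¬(b = 0 ∧ c = 0)) :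
    volume (Bad A₁ A₂ d (a, b, c)) ≤
      ENNReal.ofReal (10 * d / (A₁ * |(b:ℝ)| + A₂ * |(c:ℝ)|)) := by
  set M := A₁ * |(b:ℝ)| with hMdef
  set N := A₂ * |(c:ℝ)| with hNdef
  have hM0 : 0 ≤ M := by positivity
  have hN0 : 0 ≤ N := by positivity
  have hL1 : 1 ≤ M + N := by
    rcases not_and_or.mp hbc with hb | hc
    · have : (1:ℝ) ≤ |(b:ℝ)| := abs_int_ge1 hb
      nlinarith
    · have : (1:ℝ) ≤ |(c:ℝ)| := abs_int_ge1 hc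
      nlinarith
  by_cases hcase : 4 * N ≤ M
  · -- slice in h₁₂
    have hκ : 0 < (2/5) * (M + N) := by linarith
    have hco : ∀ x z : ℝ, x ∈ Set.Ioc (1:ℝ) 2 → z ∈ Set.Ioc (1:ℝ) 2 →
        (2/5) * (M + N) ≤ |A₁ * x * (b:ℝ) + A₂ * z * (c:ℝ)| := by
      intro x z hx hz
      have h1 : |A₁ * x * (b:ℝ)| = A₁ * x * |(b:ℝ)| := by
        rw [abs_mul, abs_mul, abs_of_nonneg (by linarith : (0:ℝ) ≤ A₁),
          abs_of_pos (by linarith [hx.1] : (0:ℝ) < x)]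
      have h2 : |A₂ * z * (c:ℝ)| = A₂ * z * |(c:ℝ)| := by
        rw [abs_mul, abs_mul, abs_of_nonneg (by linarith : (0:ℝ) ≤ A₂),
          abs_of_pos (by linarith [hz.1] : (0:ℝ) < z)]
      have htri : |A₁ * x * (b:ℝ)| - |A₂ * z * (c:ℝ)| ≤
          |A₁ * x * (b:ℝ) + A₂ * z * (c:ℝ)| := by
        have := abs_add_le (A₁ * x * (b:ℝ) + A₂ * z * (c:ℝ)) (-(A₂ * z * (c:ℝ)))
        simp only [add_neg_cancel_right, abs_neg] at this
        linarith
      have hxb : M ≤ A₁ * x * |(b:ℝ)| := by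
        nlinarith [hx.1, abs_nonneg ((b:ℝ)), mul_nonneg (by linarith : (0:ℝ) ≤ A₁) (abs_nonneg ((b:ℝ)))]
      have hzc : A₂ * z * |(c:ℝ)| ≤ 2 * N := by
        nlinarith [hz.2, abs_nonneg ((c:ℝ)), mul_nonneg (by linarith : (0:ℝ) ≤ A₂) (abs_nonneg ((c:ℝ)))]
      rw [h1, h2] at htri
      linarith
    refine le_trans (M2 hκ hco) ?_
    apply ENNReal.ofReal_le_ofReal
    rw [div_le_div_iff₀ hκ (by linarith)]
    nlinarith
  · -- M < 4N, so c ≠ 0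
    have hNpos : 0 < N := by nlinarith
    have hc : c ≠ 0 := by
      intro h
      rw [h] at hNdef
      simp at hNdef
      nlinarith [hNdef]
    refine le_trans (M1 hA2 hc) ?_
    apply ENNReal.ofReal_le_ofReal
    rw [div_le_div_iff₀ hNpos (by linarith)]
    nlinarith

def BadE (A₁ A₂ d : ℝ) (t : ℤ × ℤ × ℤ) : Set (ℝ × ℝ × ℝ × ℝ) :=
  if t = (0, 0, 0) then ∅ else Bad A₁ A₂ d t

lemma measurable_BadE (A₁ A₂ d : ℝ) (t : ℤ × ℤ × ℤ) : MeasurableSet (BadE A₁ A₂ d t) := by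
  unfold BadE
  split
  · exact MeasurableSet.empty
  · exact measurable_Bad A₁ A₂ d t

lemma BadE_subset (A₁ A₂ d : ℝ) (t : ℤ × ℤ × ℤ) : BadE A₁ A₂ d t ⊆ channelCube := by
  unfold BadE
  split
  · exact Set.empty_subset _
  · exact Bad_subset A₁ A₂ d t

lemma BadE_le_Bad (A₁ A₂ d : ℝ) (t : ℤ × ℤ × ℤ) :
    volume (BadE A₁ A₂ d t) ≤ volume (Bad A₁ A₂ d t) := by
  unfold BadE
  split
  · simp
  · exact le_rfl

lemma card_Icc_erase_le {m : ℤ} {r : ℝ} (hm : 0 ≤ m) (h : (m : ℝ) ≤ r) :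
    ((((Finset.Icc (-m) m)).erase (0:ℤ)).card : ℝ≥0∞) ≤ ENNReal.ofReal (2 * r) := by
  have hcard : (((Finset.Icc (-m) m)).erase (0:ℤ)).card = (2 * m).toNat := by
    rw [Finset.card_erase_of_mem (Finset.mem_Icc.mpr ⟨by linarith, hm⟩), Int.card_Icc]
    omega
  rw [hcard, ← ENNReal.ofReal_natCast]
  apply ENNReal.ofReal_le_ofReal
  have h4 : (((2 * m).toNat : ℕ) : ℝ) = 2 * (m : ℝ) := by
    have := Int.toNat_of_nonneg (by linarith : (0:ℤ) ≤ 2 * m)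
    exact_mod_cast congrArg (fun z : ℤ => (z : ℝ)) this
  rw [h4]; linarith

lemma card_prod_erase_le {m₁ m₂ : ℤ} {r₁ r₂ : ℝ} (hm₁ : 0 ≤ m₁) (hm₂ : 0 ≤ m₂)
    (h₁ : (m₁ : ℝ) ≤ r₁) (h₂ : (m₂ : ℝ) ≤ r₂) :
    ((((Finset.Icc (-m₁) m₁) ×ˢ (Finset.Icc (-m₂) m₂)).erase ((0:ℤ), (0:ℤ))).card : ℝ≥0∞)
      ≤ ENNReal.ofReal ((2 * r₁) * (2 * r₂) + 2 * r₁ + 2 * r₂) := by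
  have hr₁ : (0:ℝ) ≤ r₁ := le_trans (by exact_mod_cast hm₁) h₁
  have hr₂ : (0:ℝ) ≤ r₂ := le_trans (by exact_mod_cast hm₂) h₂
  have hmem : ((0:ℤ), (0:ℤ)) ∈ (Finset.Icc (-m₁) m₁) ×ˢ (Finset.Icc (-m₂) m₂) := by
    simp only [Finset.mem_product, Finset.mem_Icc]
    omega
  have hcard : (((Finset.Icc (-m₁) m₁) ×ˢ (Finset.Icc (-m₂) m₂)).erase ((0:ℤ), (0:ℤ))).card =
      (2 * m₁ + 1).toNat * (2 * m₂ + 1).toNat - 1 := by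
    rw [Finset.card_erase_of_mem hmem, Finset.card_product, Int.card_Icc, Int.card_Icc]
    congr 2 <;> omega
  have e1 : ((2 * m₁ + 1).toNat : ℝ) = 2 * (m₁:ℝ) + 1 := by
    have h := Int.toNat_of_nonneg (by linarith : (0:ℤ) ≤ 2 * m₁ + 1)
    have h' : (((2 * m₁ + 1).toNat : ℤ) : ℝ) = ((2 * m₁ + 1 : ℤ) : ℝ) := by rw [h]
    push_cast at h'
    linarith
  have e2 : ((2 * m₂ + 1).toNat : ℝ) = 2 * (m₂:ℝ) + 1 := by
    have h := Int.toNat_of_nonneg (by linarith : (0:ℤ) ≤ 2 * m₂ + 1)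
    have h' : (((2 * m₂ + 1).toNat : ℤ) : ℝ) = ((2 * m₂ + 1 : ℤ) : ℝ) := by rw [h]
    push_cast at h'
    linarith
  have hge : 1 ≤ (2 * m₁ + 1).toNat * (2 * m₂ + 1).toNat := by
    have g1 : 1 ≤ (2 * m₁ + 1).toNat := by omega
    have g2 : 1 ≤ (2 * m₂ + 1).toNat := by omega
    exact Nat.one_le_iff_ne_zero.mpr (Nat.mul_ne_zero (by omega) (by omega))
  have hr : ((((2 * m₁ + 1).toNat * (2 * m₂ + 1).toNat - 1 : ℕ)) : ℝ) =
      (2 * (m₁:ℝ) + 1) * (2 * (m₂:ℝ) + 1) - 1 := by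
    rw [Nat.cast_sub hge, Nat.cast_mul, e1, e2]
    norm_num
  rw [hcard, ← ENNReal.ofReal_natCast]
  apply ENNReal.ofReal_le_ofReal
  rw [hr]
  nlinarith [mul_le_mul h₁ h₂ (by exact_mod_cast hm₂) hr₁]

lemma innerII (A₁ A₂ Q d : ℝ) (hA1 : 1 ≤ A₁) (hA2sq : A₂ = A₁ ^ 2) (hQ : 1 ≤ Q)
    (hd0 : 0 < d) (hd1 : d ≤ 1) (n₀ n₁ : ℤ) (hn₀ : (n₀ : ℝ) ≤ 2 * Q)
    (c : ℤ) (hN : 3 * Q < A₂ * |(c:ℝ)|) :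
    (∑ b ∈ Finset.Icc (-n₁) n₁, ∑ a ∈ Finset.Icc (-n₀) n₀, volume (BadE A₁ A₂ d (a, b, c)))
      ≤ ENNReal.ofReal (1500 * d * Q / A₁) := by
  classical
  have hA2 : 1 ≤ A₂ := by nlinarith
  have hA10 : 0 < A₁ := by linarith
  have hc0 : c ≠ 0 := by
    intro h
    subst h
    simp only [Int.cast_zero, abs_zero, mul_zero] at hN
    linarith
  have hc1 : (1:ℝ) ≤ |(c:ℝ)| := abs_int_ge1 hc0
  have hNpos : 0 < A₂ * |(c:ℝ)| := by nlinarith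
  have hA1N : A₁ ≤ A₂ * |(c:ℝ)| := by nlinarith
  have hpt : ∀ a b : ℤ, volume (BadE A₁ A₂ d (a, b, c)) ≤
      ENNReal.ofReal (20 * d / (A₂ * |(c:ℝ)|)) := by
    intro a b
    refine le_trans (BadE_le_Bad _ _ _ _) ?_
    by_cases ha : a = 0
    · refine le_trans (M1 hA2 hc0) (ENNReal.ofReal_le_ofReal ?_)
      exact (div_le_div_iff_of_pos_right hNpos).mpr (by linarith)
    · exact M3 (by linarith) hA2 hd0 hd1 ha hc0
  have hcardIa : ((Finset.Icc (-n₀) n₀).card : ℝ≥0∞) ≤ ENNReal.ofReal (5 * Q) := by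
    rcases le_or_gt 0 n₀ with hn | hn
    · exact le_trans (card_Icc_le hn hn₀) (ENNReal.ofReal_le_ofReal (by linarith))
    · rw [Finset.Icc_eq_empty (by omega)]
      simp
  have hsuma : ∀ b : ℤ, (∑ a ∈ Finset.Icc (-n₀) n₀, volume (BadE A₁ A₂ d (a, b, c)))
      ≤ ENNReal.ofReal (5 * Q) * ENNReal.ofReal (20 * d / (A₂ * |(c:ℝ)|)) := by
    intro b
    calc ∑ a ∈ Finset.Icc (-n₀) n₀, volume (BadE A₁ A₂ d (a, b, c))
        ≤ (Finset.Icc (-n₀) n₀).card • ENNReal.ofReal (20 * d / (A₂ * |(c:ℝ)|)) :=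
          Finset.sum_le_card_nsmul _ _ _ (fun a _ => hpt a b)
      _ = ((Finset.Icc (-n₀) n₀).card : ℝ≥0∞) * ENNReal.ofReal (20 * d / (A₂ * |(c:ℝ)|)) := by
          rw [nsmul_eq_mul]
      _ ≤ _ := mul_le_mul_left hcardIa _
  have hvan : ∀ b ∈ Finset.Icc (-n₁) n₁, ¬(A₁ * |(b:ℝ)| < 7 * (A₂ * |(c:ℝ)|)) →
      (∑ a ∈ Finset.Icc (-n₀) n₀, volume (BadE A₁ A₂ d (a, b, c))) = 0 := by
    intro b _ hb
    apply Finset.sum_eq_zero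
    intro a ha
    rcases Finset.mem_Icc.mp ha with ⟨h1, h2⟩
    have habs : |(a:ℝ)| ≤ 2 * Q := by
      have h3 : |a| ≤ n₀ := abs_le.mpr ⟨h1, h2⟩
      rw [← Int.cast_abs]
      exact le_trans (by exact_mod_cast h3) hn₀
    have hne : (a, b, c) ≠ ((0:ℤ), (0:ℤ), (0:ℤ)) :=
      fun h => hc0 (congrArg (fun t : ℤ × ℤ × ℤ => t.2.2) h)
    have hineq : d + 4 * |(a:ℝ)| + 4 * (A₂ * |(c:ℝ)|) ≤ A₁ * |(b:ℝ)| := by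
      push_neg at hb
      linarith
    unfold BadE
    rw [if_neg hne, Bad_empty_b (by linarith) (by linarith) hineq]
    exact measure_empty
  set mb : ℤ := ⌊7 * (A₂ * |(c:ℝ)|) / A₁⌋ with hmbdef
  have hmb0 : 0 ≤ mb := Int.le_floor.mpr (by
    push_cast
    exact div_nonneg (by nlinarith) (by linarith))
  have hmem : ∀ b ∈ Finset.Icc (-n₁) n₁, (A₁ * |(b:ℝ)| < 7 * (A₂ * |(c:ℝ)|)) →
      b ∈ Finset.Icc (-mb) mb := by
    intro b _ hb
    have h1 : |(b:ℝ)| < 7 * (A₂ * |(c:ℝ)|) / A₁ := by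
      rw [lt_div_iff₀ hA10]
      linarith [mul_comm A₁ |(b:ℝ)|]
    have h2 : |b| ≤ mb := Int.le_floor.mpr (by rw [Int.cast_abs]; linarith)
    exact Finset.mem_Icc.mpr (abs_le.mp h2)
  have hmain := sum_bound (Finset.Icc (-n₁) n₁) (Finset.Icc (-mb) mb)
      (fun b => ∑ a ∈ Finset.Icc (-n₀) n₀, volume (BadE A₁ A₂ d (a, b, c)))
      (fun b => A₁ * |(b:ℝ)| < 7 * (A₂ * |(c:ℝ)|))
      (ENNReal.ofReal (5 * Q) * ENNReal.ofReal (20 * d / (A₂ * |(c:ℝ)|)))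
      hvan (fun b _ _ => hsuma b) hmem
  refine le_trans hmain ?_
  have hcardmb : ((Finset.Icc (-mb) mb).card : ℝ≥0∞) ≤
      ENNReal.ofReal (15 * (A₂ * |(c:ℝ)|) / A₁) := by
    refine le_trans (card_Icc_le hmb0 (Int.floor_le _)) (ENNReal.ofReal_le_ofReal ?_)
    have hdiv : (1:ℝ) ≤ (A₂ * |(c:ℝ)|) / A₁ := (one_le_div hA10).mpr hA1N
    have : 2 * (7 * (A₂ * |(c:ℝ)|) / A₁) = 14 * ((A₂ * |(c:ℝ)|) / A₁) := by ring
    rw [this]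
    have : 15 * (A₂ * |(c:ℝ)|) / A₁ = 15 * ((A₂ * |(c:ℝ)|) / A₁) := by ring
    rw [this]
    linarith
  calc ((Finset.Icc (-mb) mb).card : ℝ≥0∞) *
        (ENNReal.ofReal (5 * Q) * ENNReal.ofReal (20 * d / (A₂ * |(c:ℝ)|)))
      ≤ ENNReal.ofReal (15 * (A₂ * |(c:ℝ)|) / A₁) *
        (ENNReal.ofReal (5 * Q) * ENNReal.ofReal (20 * d / (A₂ * |(c:ℝ)|))) :=
        mul_le_mul_left hcardmb _
    _ = ENNReal.ofReal ((15 * (A₂ * |(c:ℝ)|) / A₁) * ((5 * Q) * (20 * d / (A₂ * |(c:ℝ)|)))) := by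
        rw [← ENNReal.ofReal_mul (by positivity), ← ENNReal.ofReal_mul (by positivity)]
    _ = ENNReal.ofReal (1500 * d * Q / A₁) := by
        congr 1
        field_simp
        ring

lemma innerI (A₁ A₂ d : ℝ) (hA1 : 1 ≤ A₁) (hA2 : 1 ≤ A₂) (hd0 : 0 < d) (hd1 : d ≤ 1)
    (n₀ : ℤ) (b c : ℤ) (hbc : ¬(b = 0 ∧ c = 0)) :
    (∑ a ∈ Finset.Icc (-n₀) n₀, volume (BadE A₁ A₂ d (a, b, c))) ≤
      ENNReal.ofReal (110 * d) := by
  classical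
  set L := A₁ * |(b:ℝ)| + A₂ * |(c:ℝ)| with hLdef
  have hL1 : 1 ≤ L := by
    rcases not_and_or.mp hbc with hb | hc
    · have := abs_int_ge1 hb
      have h2 : (0:ℝ) ≤ A₂ * |(c:ℝ)| := by positivity
      nlinarith
    · have := abs_int_ge1 hc
      have h2 : (0:ℝ) ≤ A₁ * |(b:ℝ)| := by positivity
      nlinarith
  have hL0 : 0 < L := by linarith
  set ma : ℤ := ⌊d + 4 * L⌋ with hmadef
  have hma0 : 0 ≤ ma := Int.le_floor.mpr (by push_cast; linarith)
  have h1 : ∀ a ∈ Finset.Icc (-n₀) n₀, ¬(|(a:ℝ)| < d + 4 * L) →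
      volume (BadE A₁ A₂ d (a, b, c)) = 0 := by
    intro a _ hP
    push_neg at hP
    have hne : (a, b, c) ≠ ((0:ℤ), (0:ℤ), (0:ℤ)) := by
      intro h
      exact hbc ⟨congrArg (fun t : ℤ × ℤ × ℤ => t.2.1) h, congrArg (fun t : ℤ × ℤ × ℤ => t.2.2) h⟩
    unfold BadE
    rw [if_neg hne, Bad_empty_a (by linarith) (by linarith) (by rw [hLdef] at hP; linarith)]
    exact measure_empty
  have h2 : ∀ a ∈ Finset.Icc (-n₀) n₀, (|(a:ℝ)| < d + 4 * L) →
      volume (BadE A₁ A₂ d (a, b, c)) ≤ ENNReal.ofReal (10 * d / L) := by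
    intro a _ _
    exact le_trans (BadE_le_Bad _ _ _ _) (M4 hA1 hA2 hd0 hbc)
  have h3 : ∀ a ∈ Finset.Icc (-n₀) n₀, (|(a:ℝ)| < d + 4 * L) → a ∈ Finset.Icc (-ma) ma := by
    intro a _ hP
    have : |a| ≤ ma := Int.le_floor.mpr (by rw [Int.cast_abs]; linarith)
    exact Finset.mem_Icc.mpr (abs_le.mp this)
  refine le_trans (sum_bound _ _ _ _ _ h1 h2 h3) ?_
  have hcard : ((Finset.Icc (-ma) ma).card : ℝ≥0∞) ≤ ENNReal.ofReal (11 * L) := by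
    refine le_trans (card_Icc_le hma0 (Int.floor_le _)) (ENNReal.ofReal_le_ofReal ?_)
    linarith
  calc ((Finset.Icc (-ma) ma).card : ℝ≥0∞) * ENNReal.ofReal (10 * d / L)
      ≤ ENNReal.ofReal (11 * L) * ENNReal.ofReal (10 * d / L) := mul_le_mul_left hcard _
    _ = ENNReal.ofReal ((11 * L) * (10 * d / L)) := by
        rw [← ENNReal.ofReal_mul (by positivity)]
    _ = ENNReal.ofReal (110 * d) := by
        congr 1
        field_simp
        ring

lemma partI (A₁ A₂ Q d : ℝ) (hA1 : 1 ≤ A₁) (hA2sq : A₂ = A₁ ^ 2) (hQ : 1 ≤ Q)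
    (hd0 : 0 < d) (hd1 : d ≤ 1) (n₀ n₁ : ℤ) (hn₀ : (n₀ : ℝ) ≤ 2 * Q) :
    (∑ c ∈ (Finset.Icc (-n₀) n₀).filter (fun c : ℤ => A₂ * |(c:ℝ)| ≤ 3 * Q),
      ∑ b ∈ Finset.Icc (-n₁) n₁, ∑ a ∈ Finset.Icc (-n₀) n₀, volume (BadE A₁ A₂ d (a, b, c)))
    ≤ ENNReal.ofReal (27720 * (d * Q ^ 2 / A₂) + 5280 * (d * Q / A₁)) := by
  classical
  have hA2 : 1 ≤ A₂ := by nlinarith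
  have hA10 : 0 < A₁ := by linarith
  have hA20 : 0 < A₂ := by linarith
  have hA12 : A₁ ≤ A₂ := by nlinarith
  have hQ0 : 0 < Q := by linarith
  set CI := (Finset.Icc (-n₀) n₀).filter (fun c : ℤ => A₂ * |(c:ℝ)| ≤ 3 * Q) with hCIdef
  set mc : ℤ := ⌊3 * Q / A₂⌋ with hmcdef
  set mb : ℤ := ⌊21 * Q / A₁⌋ with hmbdef
  have hmc0 : 0 ≤ mc := Int.le_floor.mpr (by push_cast; positivity)
  have hmb0 : 0 ≤ mb := Int.le_floor.mpr (by push_cast; positivity)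
  have hre : (∑ c ∈ CI, ∑ b ∈ Finset.Icc (-n₁) n₁,
        ∑ a ∈ Finset.Icc (-n₀) n₀, volume (BadE A₁ A₂ d (a, b, c)))
      = ∑ p ∈ CI ×ˢ Finset.Icc (-n₁) n₁,
        ∑ a ∈ Finset.Icc (-n₀) n₀, volume (BadE A₁ A₂ d (a, p.2, p.1)) := by
    rw [Finset.sum_product]
  rw [hre]
  have hbound := sum_bound (CI ×ˢ Finset.Icc (-n₁) n₁)
      (((Finset.Icc (-mc) mc) ×ˢ (Finset.Icc (-mb) mb)).erase ((0:ℤ), (0:ℤ)))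
      (fun p => ∑ a ∈ Finset.Icc (-n₀) n₀, volume (BadE A₁ A₂ d (a, p.2, p.1)))
      (fun p => (¬(p.2 = 0 ∧ p.1 = 0)) ∧ A₁ * |(p.2:ℝ)| < 21 * Q)
      (ENNReal.ofReal (110 * d)) ?_ ?_ ?_
  · refine le_trans hbound ?_
    have hcard := card_prod_erase_le hmc0 hmb0 (Int.floor_le (3 * Q / A₂)) (Int.floor_le (21 * Q / A₁))
    calc ((((Finset.Icc (-mc) mc) ×ˢ (Finset.Icc (-mb) mb)).erase ((0:ℤ), (0:ℤ))).card : ℝ≥0∞) *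
          ENNReal.ofReal (110 * d)
        ≤ ENNReal.ofReal ((2 * (3 * Q / A₂)) * (2 * (21 * Q / A₁)) + 2 * (3 * Q / A₂) +
            2 * (21 * Q / A₁)) * ENNReal.ofReal (110 * d) := mul_le_mul_left hcard _
      _ = ENNReal.ofReal (((2 * (3 * Q / A₂)) * (2 * (21 * Q / A₁)) + 2 * (3 * Q / A₂) +
            2 * (21 * Q / A₁)) * (110 * d)) := by
          rw [← ENNReal.ofReal_mul (by positivity)]
      _ ≤ ENNReal.ofReal (27720 * (d * Q ^ 2 / A₂) + 5280 * (d * Q / A₁)) := by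
          apply ENNReal.ofReal_le_ofReal
          have k1 : (2 * (3 * Q / A₂)) * (2 * (21 * Q / A₁)) ≤ 252 * (Q ^ 2 / A₂) := by
            have e : (2 * (3 * Q / A₂)) * (2 * (21 * Q / A₁)) = 252 * Q ^ 2 / (A₂ * A₁) := by
              field_simp
              ring
            rw [e]
            have : 252 * Q ^ 2 / (A₂ * A₁) ≤ 252 * Q ^ 2 / A₂ :=
              div_le_div_of_nonneg_left (by positivity) hA20 (by nlinarith)
            calc 252 * Q ^ 2 / (A₂ * A₁) ≤ 252 * Q ^ 2 / A₂ := this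
              _ = 252 * (Q ^ 2 / A₂) := by ring
          have k2 : 2 * (3 * Q / A₂) ≤ 6 * (Q / A₁) := by
            have : Q / A₂ ≤ Q / A₁ := div_le_div_of_nonneg_left (by positivity) hA10 hA12
            calc 2 * (3 * Q / A₂) = 6 * (Q / A₂) := by ring
              _ ≤ 6 * (Q / A₁) := by linarith
          have hX : (2 * (3 * Q / A₂)) * (2 * (21 * Q / A₁)) + 2 * (3 * Q / A₂) +
              2 * (21 * Q / A₁) ≤ 252 * (Q ^ 2 / A₂) + 48 * (Q / A₁) := by
            have : 2 * (21 * Q / A₁) = 42 * (Q / A₁) := by ring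
            linarith
          calc ((2 * (3 * Q / A₂)) * (2 * (21 * Q / A₁)) + 2 * (3 * Q / A₂) +
                2 * (21 * Q / A₁)) * (110 * d)
              ≤ (252 * (Q ^ 2 / A₂) + 48 * (Q / A₁)) * (110 * d) :=
                mul_le_mul_of_nonneg_right hX (by positivity)
            _ = 27720 * (d * Q ^ 2 / A₂) + 5280 * (d * Q / A₁) := by ring
  · -- h1 : vanishing
    intro p hp hnP
    rcases Finset.mem_product.mp hp with ⟨hpc, hpb⟩
    rcases Finset.mem_filter.mp hpc with ⟨hpc0, hpcRI⟩
    rw [not_and_or] at hnP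
    rcases hnP with h0 | h21
    · push_neg at h0
      rcases not_not.mp (by simpa using h0) with ⟨hb0, hc0⟩
      apply Finset.sum_eq_zero
      intro a _
      by_cases ha : a = 0
      · have : (a, p.2, p.1) = ((0:ℤ), (0:ℤ), (0:ℤ)) := by rw [ha, hb0, hc0]
        unfold BadE
        rw [if_pos this]
        exact measure_empty
      · have hne : (a, p.2, p.1) ≠ ((0:ℤ), (0:ℤ), (0:ℤ)) :=
          fun h => ha (congrArg (fun t : ℤ × ℤ × ℤ => t.1) h)
        unfold BadE
        rw [if_neg hne, Bad_empty_a (by linarith) (by linarith) ?_]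
        · exact measure_empty
        · rw [hb0, hc0]
          have := abs_int_ge1 ha
          simp only [Int.cast_zero, abs_zero, mul_zero]
          linarith
    · push_neg at h21
      have hb0 : p.2 ≠ 0 := by
        intro h
        rw [h] at h21
        simp only [Int.cast_zero, abs_zero, mul_zero] at h21
        linarith
      apply Finset.sum_eq_zero
      intro a ha
      rcases Finset.mem_Icc.mp ha with ⟨ha1, ha2⟩
      have haabs : |(a:ℝ)| ≤ 2 * Q := by
        have h3 : |a| ≤ n₀ := abs_le.mpr ⟨ha1, ha2⟩
        rw [← Int.cast_abs]
        exact le_trans (by exact_mod_cast h3) hn₀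
      have hne : (a, p.2, p.1) ≠ ((0:ℤ), (0:ℤ), (0:ℤ)) :=
        fun h => hb0 (congrArg (fun t : ℤ × ℤ × ℤ => t.2.1) h)
      unfold BadE
      rw [if_neg hne, Bad_empty_b (by linarith) (by linarith) (by linarith)]
      exact measure_empty
  · -- h2
    intro p _ hP
    exact innerI A₁ A₂ d hA1 hA2 hd0 hd1 n₀ p.2 p.1 hP.1
  · -- h3
    intro p hp hP
    rcases Finset.mem_product.mp hp with ⟨hpc, _⟩
    rcases Finset.mem_filter.mp hpc with ⟨_, hpcRI⟩
    refine Finset.mem_erase.mpr ⟨?_, Finset.mem_product.mpr ⟨?_, ?_⟩⟩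
    · intro h
      exact hP.1 ⟨congrArg Prod.snd h, congrArg Prod.fst h⟩
    · have h1 : |(p.1:ℝ)| ≤ 3 * Q / A₂ := by
        rw [le_div_iff₀ hA20]
        linarith [mul_comm A₂ |(p.1:ℝ)|]
      have h2 : |p.1| ≤ mc := Int.le_floor.mpr (by rw [Int.cast_abs]; linarith)
      exact Finset.mem_Icc.mpr (abs_le.mp h2)
    · have h1 : |(p.2:ℝ)| ≤ 21 * Q / A₁ := by
        rw [le_div_iff₀ hA10]
        linarith [mul_comm A₁ |(p.2:ℝ)|, hP.2]
      have h2 : |p.2| ≤ mb := Int.le_floor.mpr (by rw [Int.cast_abs]; linarith)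
      exact Finset.mem_Icc.mpr (abs_le.mp h2)

lemma partII (A₁ A₂ Q d : ℝ) (hA1 : 1 ≤ A₁) (hA2sq : A₂ = A₁ ^ 2) (hQ : 1 ≤ Q)
    (hd0 : 0 < d) (hd1 : d ≤ 1) (n₀ n₁ : ℤ) (hn₀ : (n₀ : ℝ) ≤ 2 * Q) (hn₁ : (n₁ : ℝ) ≤ 4 * Q) :
    (∑ c ∈ (Finset.Icc (-n₀) n₀).filter (fun c : ℤ => ¬(A₂ * |(c:ℝ)| ≤ 3 * Q)),
      ∑ b ∈ Finset.Icc (-n₁) n₁, ∑ a ∈ Finset.Icc (-n₀) n₀, volume (BadE A₁ A₂ d (a, b, c)))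
    ≤ ENNReal.ofReal (75000 * (d * Q ^ 2 / A₂)) := by
  classical
  have hA2 : 1 ≤ A₂ := by nlinarith
  have hA10 : 0 < A₁ := by linarith
  have hA20 : 0 < A₂ := by linarith
  have hQ0 : 0 < Q := by linarith
  set mcII : ℤ := ⌊25 * Q / A₁⌋ with hmcdef
  have hmc0 : 0 ≤ mcII := Int.le_floor.mpr (by push_cast; positivity)
  have hbound := sum_bound ((Finset.Icc (-n₀) n₀).filter (fun c : ℤ => ¬(A₂ * |(c:ℝ)| ≤ 3 * Q)))
      ((Finset.Icc (-mcII) mcII).erase (0:ℤ))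
      (fun c => ∑ b ∈ Finset.Icc (-n₁) n₁, ∑ a ∈ Finset.Icc (-n₀) n₀,
        volume (BadE A₁ A₂ d (a, b, c)))
      (fun c : ℤ => A₂ * |(c:ℝ)| < 25 * A₁ * Q)
      (ENNReal.ofReal (1500 * d * Q / A₁)) ?_ ?_ ?_
  · refine le_trans hbound ?_
    have hcard := card_Icc_erase_le hmc0 (Int.floor_le (25 * Q / A₁))
    calc (((Finset.Icc (-mcII) mcII).erase (0:ℤ)).card : ℝ≥0∞) *
          ENNReal.ofReal (1500 * d * Q / A₁)
        ≤ ENNReal.ofReal (2 * (25 * Q / A₁)) * ENNReal.ofReal (1500 * d * Q / A₁) :=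
          mul_le_mul_left hcard _
      _ = ENNReal.ofReal ((2 * (25 * Q / A₁)) * (1500 * d * Q / A₁)) := by
          rw [← ENNReal.ofReal_mul (by positivity)]
      _ = ENNReal.ofReal (75000 * (d * Q ^ 2 / A₂)) := by
          congr 1
          rw [hA2sq]
          field_simp
          ring
  · -- vanishing for huge c
    intro c hc hnP
    push_neg at hnP
    have hc0 : c ≠ 0 := by
      intro h
      rw [h] at hnP
      simp only [Int.cast_zero, abs_zero, mul_zero] at hnP
      nlinarith
    apply Finset.sum_eq_zero
    intro b hb
    apply Finset.sum_eq_zero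
    intro a ha
    rcases Finset.mem_Icc.mp ha with ⟨ha1, ha2⟩
    rcases Finset.mem_Icc.mp hb with ⟨hb1, hb2⟩
    have haabs : |(a:ℝ)| ≤ 2 * Q := by
      have h3 : |a| ≤ n₀ := abs_le.mpr ⟨ha1, ha2⟩
      rw [← Int.cast_abs]
      exact le_trans (by exact_mod_cast h3) hn₀
    have hbabs : |(b:ℝ)| ≤ 4 * Q := by
      have h3 : |b| ≤ n₁ := abs_le.mpr ⟨hb1, hb2⟩
      rw [← Int.cast_abs]
      exact le_trans (by exact_mod_cast h3) hn₁
    have hne : (a, b, c) ≠ ((0:ℤ), (0:ℤ), (0:ℤ)) :=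
      fun h => hc0 (congrArg (fun t : ℤ × ℤ × ℤ => t.2.2) h)
    have hineq : d + 4 * |(a:ℝ)| + 4 * (A₁ * |(b:ℝ)|) ≤ A₂ * |(c:ℝ)| := by
      have e1 : A₁ * |(b:ℝ)| ≤ 4 * (A₁ * Q) := by nlinarith [abs_nonneg ((b:ℝ))]
      nlinarith
    unfold BadE
    rw [if_neg hne, Bad_empty_c (by linarith) (by linarith) hineq]
    exact measure_empty
  · -- main bound
    intro c hc hP
    rcases Finset.mem_filter.mp hc with ⟨_, hRI⟩
    push_neg at hRI
    exact innerII A₁ A₂ Q d hA1 hA2sq hQ hd0 hd1 n₀ n₁ hn₀ c hRI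
  · -- membership
    intro c hc hP
    rcases Finset.mem_filter.mp hc with ⟨_, hRI⟩
    push_neg at hRI
    have hc0 : c ≠ 0 := by
      intro h
      rw [h] at hRI
      simp only [Int.cast_zero, abs_zero, mul_zero] at hRI
      linarith
    refine Finset.mem_erase.mpr ⟨hc0, ?_⟩
    have heq : 25 * A₁ * Q / A₂ = 25 * Q / A₁ := by
      rw [hA2sq]
      field_simp
    have h1 : |(c:ℝ)| ≤ 25 * Q / A₁ := by
      rw [← heq, le_div_iff₀ hA20]
      linarith [mul_comm A₂ |(c:ℝ)|, hP]
    have h2 : |c| ≤ mcII := Int.le_floor.mpr (by rw [Int.cast_abs]; linarith)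
    exact Finset.mem_Icc.mpr (abs_le.mp h2)

lemma abstract_main (A₁ A₂ Q d : ℝ) (hA1 : 1 ≤ A₁) (hA2sq : A₂ = A₁ ^ 2)
    (hQ : 1 ≤ Q) (hd0 : 0 < d) (hd1 : d ≤ 1) :
    ∃ H₀ : Set (ℝ × ℝ × ℝ × ℝ), MeasurableSet H₀ ∧ H₀ ⊆ channelCube ∧
      volume H₀ ≤ ENNReal.ofReal (102720 * (d * Q ^ 2 / A₂) + 5280 * (d * Q / A₁)) ∧
      ∀ p ∈ channelCube \ H₀, ∀ a b c : ℤ, |(a:ℝ)| ≤ 2 * Q → |(b:ℝ)| ≤ 4 * Q →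
        |(c:ℝ)| ≤ 2 * Q → ¬(a = 0 ∧ b = 0 ∧ c = 0) → d ≤ |Ff A₁ A₂ (a, b, c) p| := by
  classical
  set n₀ : ℤ := ⌊2 * Q⌋ with hn₀def
  set n₁ : ℤ := ⌊4 * Q⌋ with hn₁def
  have hn₀ : (n₀ : ℝ) ≤ 2 * Q := Int.floor_le _
  have hn₁ : (n₁ : ℝ) ≤ 4 * Q := Int.floor_le _
  set T : Finset (ℤ × ℤ × ℤ) := Finset.Icc (-n₀) n₀ ×ˢ Finset.Icc (-n₁) n₁ ×ˢ
    Finset.Icc (-n₀) n₀ with hTdef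
  refine ⟨⋃ t ∈ T, BadE A₁ A₂ d t, ?_, ?_, ?_, ?_⟩
  · exact T.measurableSet_biUnion (fun t _ => measurable_BadE A₁ A₂ d t)
  · exact Set.iUnion₂_subset (fun t _ => BadE_subset A₁ A₂ d t)
  · refine le_trans (measure_biUnion_finset_le T _) ?_
    have hre : (∑ t ∈ T, volume (BadE A₁ A₂ d t)) =
        ∑ c ∈ Finset.Icc (-n₀) n₀, ∑ b ∈ Finset.Icc (-n₁) n₁, ∑ a ∈ Finset.Icc (-n₀) n₀,
          volume (BadE A₁ A₂ d (a, b, c)) := by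
      rw [hTdef, Finset.sum_product, Finset.sum_comm, Finset.sum_product]
      exact Finset.sum_comm
    rw [hre, ← Finset.sum_filter_add_sum_filter_not (Finset.Icc (-n₀) n₀)
      (fun c : ℤ => A₂ * |(c:ℝ)| ≤ 3 * Q)]
    have h1 := partI A₁ A₂ Q d hA1 hA2sq hQ hd0 hd1 n₀ n₁ hn₀
    have h2 := partII A₁ A₂ Q d hA1 hA2sq hQ hd0 hd1 n₀ n₁ hn₀ hn₁
    refine le_trans (add_le_add h1 h2) ?_
    have hA20 : (0:ℝ) < A₂ := by nlinarith
    have hA10 : (0:ℝ) < A₁ := by linarith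
    have e1 : (0:ℝ) ≤ d * Q ^ 2 / A₂ := div_nonneg (by positivity) hA20.le
    have e2 : (0:ℝ) ≤ d * Q / A₁ := div_nonneg (by positivity) hA10.le
    rw [← ENNReal.ofReal_add (by nlinarith) (by nlinarith)]
    apply ENNReal.ofReal_le_ofReal
    linarith
  · intro p hp a b c ha hb hc hne
    have hpc : p ∈ channelCube := hp.1
    have hpH : p ∉ ⋃ t ∈ T, BadE A₁ A₂ d t := hp.2
    have htT : (a, b, c) ∈ T := by
      rw [hTdef]
      refine Finset.mem_product.mpr ⟨?_, Finset.mem_product.mpr ⟨?_, ?_⟩⟩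
      · have : |a| ≤ n₀ := Int.le_floor.mpr (by rw [Int.cast_abs]; exact ha)
        exact Finset.mem_Icc.mpr (abs_le.mp this)
      · have : |b| ≤ n₁ := Int.le_floor.mpr (by rw [Int.cast_abs]; exact hb)
        exact Finset.mem_Icc.mpr (abs_le.mp this)
      · have : |c| ≤ n₀ := Int.le_floor.mpr (by rw [Int.cast_abs]; exact hc)
        exact Finset.mem_Icc.mpr (abs_le.mp this)
    have hnotin : p ∉ BadE A₁ A₂ d (a, b, c) := by
      intro hmem
      exact hpH (Set.mem_biUnion htT hmem)
    have hne' : (a, b, c) ≠ ((0:ℤ), (0:ℤ), (0:ℤ)) := by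
      intro h
      exact hne ⟨congrArg (fun t : ℤ × ℤ × ℤ => t.1) h,
        congrArg (fun t : ℤ × ℤ × ℤ => t.2.1) h,
        congrArg (fun t : ℤ × ℤ × ℤ => t.2.2) h⟩
    rw [BadE, if_neg hne'] at hnotin
    by_contra hlt
    push_neg at hlt
    exact hnotin ⟨hpc, hlt⟩

lemma abs_sub_le' (x y : ℝ) : |x - y| ≤ |x| + |y| := by
  have h := abs_add_le x (-y)
  rw [abs_neg] at h
  linarith [h, le_of_eq (congrArg abs (sub_eq_add_neg x y))]


/-- Outside an outage set `H̄₀ ⊆ (1,2]⁴` of small Lebesgue measure, the minimum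
constellation distance `d̄_min(ḡ₀,ḡ₁,ḡ₂)` is at least `δ·P^{-(2-4α/3)/2}`
(regime `1 ≤ α ≤ 3/2`). -/
theorem min_distance_outage_regime_one_three_halves
    (α δ ε P : ℝ)
    (hα : α ∈ Set.Icc (1 : ℝ) (3 / 2)) (hδ : δ ∈ Set.Ioc (0 : ℝ) 1) (hε : 0 < ε)
    (hP : 1 ≤ P)
    (hA₁ : ∃ n : ℕ, 0 < n ∧ P ^ ((α - 1) / 2) = (n : ℝ))
    (hA₂ : ∃ n : ℕ, 0 < n ∧ P ^ (α - 1) = (n : ℝ)) :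
    ∃ H₀ : Set (ℝ × ℝ × ℝ × ℝ), MeasurableSet H₀ ∧ H₀ ⊆ channelCube ∧
      volume H₀ ≤ ENNReal.ofReal (258048 * δ * P ^ (-ε / 2)) ∧
      ∀ h₁₁ h₁₂ h₂₁ h₂₂ : ℝ, (h₁₁, h₁₂, h₂₁, h₂₂) ∈ channelCube \ H₀ →
        ∀ q₀ q₁ q₂ q₀' q₁' q₂' : ℤ,
          |(q₀ : ℝ)| ≤ P ^ ((α / 3 - ε) / 2) → |(q₂ : ℝ)| ≤ P ^ ((α / 3 - ε) / 2) →
          |(q₀' : ℝ)| ≤ P ^ ((α / 3 - ε) / 2) → |(q₂' : ℝ)| ≤ P ^ ((α / 3 - ε) / 2) →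
          |(q₁ : ℝ)| ≤ 2 * P ^ ((α / 3 - ε) / 2) → |(q₁' : ℝ)| ≤ 2 * P ^ ((α / 3 - ε) / 2) →
          (q₀, q₁, q₂) ≠ (q₀', q₁', q₂') →
          δ * P ^ (-(2 - 4 * α / 3) / 2) ≤
            |(h₁₁ * h₂₂) * ((q₀ : ℝ) - (q₀' : ℝ))
              + P ^ ((α - 1) / 2) * (h₁₂ * h₁₁) * ((q₁ : ℝ) - (q₁' : ℝ))
              + P ^ (α - 1) * (h₁₂ * h₂₁) * ((q₂ : ℝ) - (q₂' : ℝ))| := by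
  obtain ⟨hα1, hα2⟩ := hα
  obtain ⟨hδ0, hδ1⟩ := hδ
  have hP0 : (0:ℝ) < P := lt_of_lt_of_le one_pos hP
  set A₁ : ℝ := P ^ ((α - 1) / 2) with hA₁def
  set A₂ : ℝ := P ^ (α - 1) with hA₂def
  set Q : ℝ := P ^ ((α / 3 - ε) / 2) with hQdef
  set d : ℝ := δ * P ^ (-(2 - 4 * α / 3) / 2) with hddef
  have hA1ge : 1 ≤ A₁ := by
    have h := Real.rpow_le_rpow_of_exponent_le hP (show (0:ℝ) ≤ (α - 1) / 2 by linarith)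
    rwa [Real.rpow_zero] at h
  have hA2sq : A₂ = A₁ ^ 2 := by
    rw [hA₂def, hA₁def, ← Real.rpow_natCast (P ^ ((α - 1) / 2)) 2, ← Real.rpow_mul hP0.le]
    norm_num
  have hd0 : 0 < d := mul_pos hδ0 (Real.rpow_pos_of_pos hP0 _)
  have hd1 : d ≤ 1 := by
    have h1 : P ^ (-(2 - 4 * α / 3) / 2) ≤ 1 :=
      Real.rpow_le_one_of_one_le_of_nonpos hP (by linarith)
    have h2 : 0 < P ^ (-(2 - 4 * α / 3) / 2) := Real.rpow_pos_of_pos hP0 _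
    rw [hddef]
    nlinarith
  by_cases hQ1 : 1 ≤ Q
  · obtain ⟨H₀, hmeas, hsub, hvol, hpt⟩ := abstract_main A₁ A₂ Q d hA1ge hA2sq hQ1 hd0 hd1
    refine ⟨H₀, hmeas, hsub, ?_, ?_⟩
    · refine le_trans hvol (ENNReal.ofReal_le_ofReal ?_)
      have key1 : d * Q ^ 2 / A₂ = δ * P ^ (-ε) := by
        rw [hddef, hQdef, hA₂def, ← Real.rpow_natCast (P ^ ((α / 3 - ε) / 2)) 2,
          ← Real.rpow_mul hP0.le, div_eq_mul_inv, ← Real.rpow_neg hP0.le,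
          mul_assoc, ← Real.rpow_add hP0, mul_assoc, ← Real.rpow_add hP0]
        congr 1
        push_cast
        ring
      have key2 : d * Q / A₁ = δ * P ^ (α / 3 - 1 / 2 - ε / 2) := by
        rw [hddef, hQdef, hA₁def, div_eq_mul_inv, ← Real.rpow_neg hP0.le,
          mul_assoc, ← Real.rpow_add hP0, mul_assoc, ← Real.rpow_add hP0]
        congr 1
        ring
      rw [key1, key2]
      have m1 : P ^ (-ε) ≤ P ^ (-ε / 2) :=
        Real.rpow_le_rpow_of_exponent_le hP (by linarith)
      have m2 : P ^ (α / 3 - 1 / 2 - ε / 2) ≤ P ^ (-ε / 2) :=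
        Real.rpow_le_rpow_of_exponent_le hP (by linarith)
      have hpos : 0 < P ^ (-ε / 2) := Real.rpow_pos_of_pos hP0 _
      nlinarith [mul_le_mul_of_nonneg_left m1 hδ0.le, mul_le_mul_of_nonneg_left m2 hδ0.le,
        mul_pos hδ0 hpos]
    · intro h₁₁ h₁₂ h₂₁ h₂₂ hmem q₀ q₁ q₂ q₀' q₁' q₂' hb0 hb2 hb0' hb2' hb1 hb1' hneq
      have hne : ¬((q₀ - q₀' : ℤ) = 0 ∧ (q₁ - q₁' : ℤ) = 0 ∧ (q₂ - q₂' : ℤ) = 0) := by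
        rintro ⟨e0, e1, e2⟩
        exact hneq (by
          rw [sub_eq_zero] at e0 e1 e2
          rw [e0, e1, e2])
      have happ := hpt (h₁₁, h₁₂, h₂₁, h₂₂) hmem (q₀ - q₀') (q₁ - q₁') (q₂ - q₂')
        (by push_cast; exact le_trans (abs_sub_le' _ _) (by linarith))
        (by push_cast; exact le_trans (abs_sub_le' _ _) (by linarith))
        (by push_cast; exact le_trans (abs_sub_le' _ _) (by linarith))
        hne
      have heq : Ff A₁ A₂ (q₀ - q₀', q₁ - q₁', q₂ - q₂') (h₁₁, h₁₂, h₂₁, h₂₂) =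
          (h₁₁ * h₂₂) * ((q₀ : ℝ) - (q₀' : ℝ))
            + A₁ * (h₁₂ * h₁₁) * ((q₁ : ℝ) - (q₁' : ℝ))
            + A₂ * (h₁₂ * h₂₁) * ((q₂ : ℝ) - (q₂' : ℝ)) := by
        unfold Ff
        push_cast
        ring
      rw [heq] at happ
      exact happ
  · push_neg at hQ1
    refine ⟨∅, MeasurableSet.empty, Set.empty_subset _, by simp, ?_⟩
    intro h₁₁ h₁₂ h₂₁ h₂₂ hmem q₀ q₁ q₂ q₀' q₁' q₂' hb0 hb2 hb0' hb2' hb1 hb1' hneq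
    obtain ⟨⟨hx1, hx2⟩, ⟨hy1, hy2⟩, ⟨hz1, hz2⟩, ⟨hw1, hw2⟩⟩ := mem_cube hmem.1
    have hzero : ∀ q : ℤ, |(q : ℝ)| ≤ Q → q = 0 := by
      intro q hq
      have h1 : |(q : ℝ)| < 1 := lt_of_le_of_lt hq hQ1
      have h2 : |q| < 1 := by
        have h3 : ((|q| : ℤ) : ℝ) < 1 := by rw [Int.cast_abs]; exact h1
        exact_mod_cast h3
      rcases abs_lt.mp h2 with ⟨g1, g2⟩
      omega
    have hq0 : q₀ = 0 := hzero q₀ hb0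
    have hq2 : q₂ = 0 := hzero q₂ hb2
    have hq0' : q₀' = 0 := hzero q₀' hb0'
    have hq2' : q₂' = 0 := hzero q₂' hb2'
    have hb : q₁ - q₁' ≠ 0 := by
      intro h
      exact hneq (by rw [hq0, hq2, hq0', hq2', sub_eq_zero.mp h])
    have hr1 : (1:ℝ) ≤ |(q₁ : ℝ) - (q₁' : ℝ)| := by
      have := abs_int_ge1 hb
      push_cast at this
      exact this
    have hexpr : (h₁₁ * h₂₂) * ((q₀ : ℝ) - (q₀' : ℝ))
          + A₁ * (h₁₂ * h₁₁) * ((q₁ : ℝ) - (q₁' : ℝ))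
          + A₂ * (h₁₂ * h₂₁) * ((q₂ : ℝ) - (q₂' : ℝ))
        = A₁ * (h₁₂ * h₁₁) * ((q₁ : ℝ) - (q₁' : ℝ)) := by
      rw [hq0, hq2, hq0', hq2']
      push_cast
      ring
    rw [hexpr]
    have hlow := (term_bounds' (by linarith : (0:ℝ) ≤ A₁) hy1 hy2 hx1 hx2
      (r := (q₁ : ℝ) - (q₁' : ℝ))).1
    have : (1:ℝ) ≤ A₁ * |(q₁ : ℝ) - (q₁' : ℝ)| := by nlinarith
    linarith
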